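/- Let R₁, R₂ ∈ (0,∞) with R₁ < R₂ and ν ∈ (1,∞). There exists a constant C > 0 (depending only on τ, ϱ, R₁, R₂, ν) such that for all y ∈ ℝ³ with |y| ≥ R₂ and all z ∈ ℝ³ with |z| < R₁, one has ∫₀^∞ ( |y − τ t e₁ − e^{−tΩ}·z|² + t )^{−ν} dt ≤ C ( |y| s(y) )^{−ν + 1/2}. -/

import Mathlib

open MeasureTheory Real
noncomputable section

abbrev E3 := EuclideanSpace ℝ (Fin 3)

/-- `s(x) := 1 + |x| - x₁`. -/
def sfun (x : E3) : ℝ := 1 + ‖x‖ - x 0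

/-- first standard basis vector -/
def e1 : E3 := EuclideanSpace.single 0 1

/-- the matrix Ω -/
def Om (ϱ : ℝ) : Matrix (Fin 3) (Fin 3) ℝ := !![0,0,0; 0,0,-ϱ; 0,ϱ,0]

/-- matrix-vector product as a map on `E3` -/
def mvec (M : Matrix (Fin 3) (Fin 3) ℝ) (y : E3) : E3 :=
  WithLp.toLp 2 (M.mulVec (fun i => y i) : Fin 3 → ℝ)

/-- partial derivative in direction `i` -/
def pd (i : Fin 3) (f : E3 → ℝ) : E3 → ℝ :=
  fun x => fderiv ℝ f x (EuclideanSpace.single i 1)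

/-- iterated partial derivative corresponding to a multi-index `α` -/
def mpd (α : Fin 3 → ℕ) (f : E3 → ℝ) : E3 → ℝ :=
  (pd 0)^[α 0] ((pd 1)^[α 1] ((pd 2)^[α 2] f))

/-- heat kernel -/
def Kheat (x : E3) (t : ℝ) : ℝ := (4*π*t)^(-(3:ℝ)/2) * Real.exp (-‖x‖^2/(4*t))

/-- Newtonian potential -/
def Npot (x : E3) : ℝ := (4*π*‖x‖)⁻¹

/-- velocity part of fundamental solution of the time-dependent Stokes system -/
def Tfun (j k : Fin 3) (x : E3) (t : ℝ) : ℝ :=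
  (if j = k then Kheat x t else 0)
    + pd j (pd k (fun z => ∫ y : E3, Npot (z - y) * Kheat y t)) x

/-- the function Γ -/
def Gam (τ ϱ : ℝ) (j k : Fin 3) (x y : E3) (t : ℝ) : ℝ :=
  ∑ m : Fin 3, Tfun j m (x - (τ*t) • e1 - mvec (NormedSpace.exp ((-t) • Om ϱ)) y) t
      * (NormedSpace.exp ((-t) • Om ϱ)) m k

/-- the function Z -/
def Zfun (τ ϱ : ℝ) (j k : Fin 3) (x y : E3) : ℝ :=
  ∫ t in Set.Ioi (0:ℝ), Gam τ ϱ j k x y t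

/-- ψ -/
def psi (r : ℝ) : ℝ := ∫ t in (0:ℝ)..r, (1 - Real.exp (-t)) / t

/-- Φ -/
def Phi (τ : ℝ) (x : E3) : ℝ := (4*π*τ)⁻¹ * psi (τ * (‖x‖ - x 0) / 2)

/-- velocity part of the fundamental solution of the Oseen system -/
def Efun (τ : ℝ) (j k : Fin 3) (x : E3) : ℝ :=
  (if j = k then ∑ i : Fin 3, pd i (pd i (Phi τ)) x else 0) - pd j (pd k (Phi τ)) x

/-- fundamental solution of the scalar Oseen equation -/
def Ofun (τ : ℝ) (x : E3) : ℝ := (4*π*‖x‖)⁻¹ * Real.exp (-τ * (‖x‖ - x 0) / 2)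

/-- fundamental solution of the scalar Oseen resolvent equation -/
def Olam (τ lam : ℝ) (x : E3) : ℝ :=
  (4*π*‖x‖)⁻¹ * Real.exp (-Real.sqrt (lam + τ^2/4) * ‖x‖ + τ * x 0 / 2)

/-- Fourier transform with the convention of the paper -/
def ft (φ : E3 → ℂ) (ξ : E3) : ℂ :=
  ((2*π : ℝ)^(-(3:ℝ)/2) : ℝ) * ∫ x : E3, Complex.exp (-Complex.I * (inner ℝ ξ x : ℝ)) * φ x


/-! The rotation `e^{-tΩ}` is orthogonal since `Ω` is skew-symmetric, so `w = e^{-tΩ} z` stays in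
the ball of radius `R₁`. For `|y| ≥ R₂ > R₁ ≥ |w|` and `t ≥ 0` an elementary estimate gives
`|y| s(y) + (t - t₀)² ≤ K (|y - τ t e₁ - w|² + t)` with `t₀ = max(y₁, 0) / τ`, the time at which
`τ t e₁` passes closest to `y`. The integrand is therefore at most `K^ν (|y| s(y) + (t - t₀)²)^{-ν}`,
and the substitution `t = t₀ + √(|y| s(y)) v` turns the integral of the latter over `ℝ` into
`(|y| s(y))^{1/2 - ν} ∫ (1 + v²)^{-ν} dv`. -/

lemma Matrix.exp_mem_unitary_of_mem_skewAdjoint {𝕜 n : Type*} [RCLike 𝕜] [Fintype n]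
    [DecidableEq n] {A : Matrix n n 𝕜} (hA : A ∈ skewAdjoint (Matrix n n 𝕜)) :
    NormedSpace.exp A ∈ unitary (Matrix n n 𝕜) := by
  have hstar : star (NormedSpace.exp A) = NormedSpace.exp (-A) := by
    rw [Matrix.star_eq_conjTranspose, ← Matrix.exp_conjTranspose, ← Matrix.star_eq_conjTranspose,
      skewAdjoint.mem_iff.mp hA]
  rw [Unitary.mem_iff, hstar, ← Matrix.exp_add_of_commute _ _ (Commute.refl A).neg_left,
    ← Matrix.exp_add_of_commute _ _ (Commute.refl A).neg_right, neg_add_cancel, add_neg_cancel,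
    NormedSpace.exp_zero, and_self]

lemma Om_mem_skewAdjoint (ϱ : ℝ) : Om ϱ ∈ skewAdjoint (Matrix (Fin 3) (Fin 3) ℝ) := by
  rw [skewAdjoint.mem_iff, Matrix.star_eq_conjTranspose,
    Matrix.conjTranspose_eq_transpose_of_trivial]
  ext i j
  fin_cases i <;> fin_cases j <;> simp [Om]

lemma mvec_eq_toEuclideanCLM (M : Matrix (Fin 3) (Fin 3) ℝ) (z : E3) :
    mvec M z = Matrix.toEuclideanCLM (𝕜 := ℝ) M z :=
  rfl

lemma norm_mvec_of_mem_unitary {M : Matrix (Fin 3) (Fin 3) ℝ} (hM : M ∈ unitary _) (z : E3) :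
    ‖mvec M z‖ = ‖z‖ := by
  rw [mvec_eq_toEuclideanCLM]
  exact ContinuousLinearMap.norm_map_of_mem_unitary (Unitary.map_mem Matrix.toEuclideanCLM hM) z

lemma norm_mvec_exp_smul_Om (ϱ t : ℝ) (z : E3) :
    ‖mvec (NormedSpace.exp ((-t) • Om ϱ)) z‖ = ‖z‖ :=
  norm_mvec_of_mem_unitary
    (Matrix.exp_mem_unitary_of_mem_skewAdjoint (skewAdjoint.smul_mem (-t) (Om_mem_skewAdjoint ϱ)))
    z

lemma norm_e1 : ‖e1‖ = 1 := by
  simp [e1]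

lemma inner_e1 (y : E3) : inner ℝ y e1 = y 0 := by
  simp [e1, EuclideanSpace.inner_single_right]

lemma sfun_eq (y : E3) : sfun y = 1 + ‖y‖ - inner ℝ y e1 := by
  rw [inner_e1, sfun]

lemma one_le_sfun (y : E3) : 1 ≤ sfun y := by
  have := real_inner_le_norm y e1
  rw [norm_e1, mul_one] at this
  rw [sfun_eq]
  linarith

lemma sq_le_four_mul_sq_add_two_mul {d s N : ℝ} (hd : 0 ≤ d) (hs : 0 ≤ s) (h : d - s ≤ N) :
    d ^ 2 ≤ 4 * N ^ 2 + 2 * s * d := by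
  rcases le_total d (2 * s) with hds | hds <;> nlinarith

section UnitVector

variable {E : Type*} [NormedAddCommGroup E] [InnerProductSpace ℝ E] {e : E}

lemma norm_sub_smul_sq (he : ‖e‖ = 1) (y : E) (s : ℝ) :
    ‖y - s • e‖ ^ 2 = ‖y‖ ^ 2 - 2 * s * inner ℝ y e + s ^ 2 := by
  rw [norm_sub_sq_real, inner_smul_right, norm_smul, he, Real.norm_eq_abs, mul_one, sq_abs]
  ring

lemma norm_sub_le_norm_sub_smul (he : ‖e‖ = 1) (y : E) {s : ℝ} (hs : 0 ≤ s) :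
    ‖y‖ - s ≤ ‖y - s • e‖ := by
  simpa [norm_smul, he, abs_of_nonneg hs] using norm_sub_norm_le y (s • e)

lemma weight_add_sq_le (he : ‖e‖ = 1) {τ R₂ t : ℝ} (hτ : 0 < τ) (hR₂ : 0 < R₂) {y : E}
    (hy : R₂ ≤ ‖y‖) (ht : 0 ≤ t) :
    ‖y‖ * (1 + ‖y‖ - inner ℝ y e) + (t - max (inner ℝ y e) 0 / τ) ^ 2
      ≤ (4 / R₂ + 2 + (τ ^ 2)⁻¹ + 2 * τ) * (‖y - (τ * t) • e‖ ^ 2 + t) := by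
  set r := ‖y‖
  set a := inner ℝ y e
  set B := ‖y - (τ * t) • e‖
  have hs : 0 ≤ τ * t := by positivity
  have hr : 0 < r := hR₂.trans_le hy
  have hB := norm_sub_smul_sq he y (τ * t)
  obtain ⟨ha₁, ha₂⟩ := abs_le.mp (by simpa [he] using abs_real_inner_le_norm y e : |a| ≤ r)
  have h_wake : r * (r - a) ≤ 2 * B ^ 2 := by
    rcases le_total a 0 with h | h <;> nlinarith [sq_nonneg (τ * t - a)]
  have h_shift : (τ * t - max a 0) ^ 2 ≤ B ^ 2 := by
    rcases le_total a 0 with h | h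
    · rw [max_eq_right h]; nlinarith
    · rw [max_eq_left h]; nlinarith
  have h_norm : r ≤ 4 / R₂ * B ^ 2 + 2 * (τ * t) := by
    have := sq_le_four_mul_sq_add_two_mul hr.le hs (norm_sub_le_norm_sub_smul he y hs)
    have : r ≤ 4 / r * B ^ 2 + 2 * (τ * t) := by
      rw [div_mul_eq_mul_div, ← sub_le_iff_le_add, le_div_iff₀ hr]; nlinarith
    exact this.trans (by gcongr)
  have h_time : (t - max a 0 / τ) ^ 2 = (τ ^ 2)⁻¹ * (τ * t - max a 0) ^ 2 := by
    field_simp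
  have : (τ ^ 2)⁻¹ * (τ * t - max a 0) ^ 2 ≤ (τ ^ 2)⁻¹ * B ^ 2 := by gcongr
  have : 0 ≤ (4 / R₂ + 2 + (τ ^ 2)⁻¹) * t := by positivity
  have : 0 ≤ 2 * τ * B ^ 2 := by positivity
  rw [h_time]
  linarith

lemma sq_add_le_of_norm_le (he : ‖e‖ = 1) {τ R₁ R₂ t : ℝ} (hτ : 0 < τ) (hR : R₁ < R₂)
    {y w : E} (hy : R₂ ≤ ‖y‖) (hw : ‖w‖ ≤ R₁) (ht : 0 ≤ t) :
    ‖y - (τ * t) • e‖ ^ 2 + t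
      ≤ (3 + 2 * R₁ ^ 2 * (4 / (R₂ - R₁) ^ 2 + 2 * τ / (R₂ - R₁)))
        * (‖y - (τ * t) • e - w‖ ^ 2 + t) := by
  set B := ‖y - (τ * t) • e‖
  set N := ‖y - (τ * t) • e - w‖
  set d := R₂ - R₁
  have hd : 0 < d := sub_pos.mpr hR
  have hs : 0 ≤ τ * t := by positivity
  have hBN : B ≤ N + R₁ := (norm_le_norm_sub_add _ w).trans (by gcongr)
  have hB : B ^ 2 ≤ 2 * N ^ 2 + 2 * R₁ ^ 2 := by
    nlinarith [sq_nonneg (N - R₁), norm_nonneg (y - (τ * t) • e), (norm_nonneg w).trans hw]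
  have hN : d - τ * t ≤ N := by
    linarith [norm_sub_le_norm_sub_smul he y hs]
  -- `N² + t` is bounded below: either `τ t ≥ (R₂ - R₁) / 2` or `N ≥ (R₂ - R₁) / 2`
  have h_unit : 1 ≤ (4 / d ^ 2 + 2 * τ / d) * (N ^ 2 + t) := by
    have := sq_le_four_mul_sq_add_two_mul hd.le hs hN
    have : 1 ≤ 4 / d ^ 2 * N ^ 2 + 2 * τ / d * t := by
      rw [div_mul_eq_mul_div, div_mul_eq_mul_div, div_add_div _ _ (by positivity) hd.ne',
        le_div_iff₀ (by positivity)]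
      nlinarith
    have : 0 ≤ 4 / d ^ 2 * t + 2 * τ / d * N ^ 2 := by positivity
    linarith
  set c := 4 / d ^ 2 + 2 * τ / d
  clear_value c
  nlinarith [sq_nonneg N]

lemma exists_weight_add_sq_le (he : ‖e‖ = 1) {τ R₁ R₂ : ℝ} (hτ : 0 < τ) (hR₁ : 0 ≤ R₁)
    (hR : R₁ < R₂) :
    ∃ K > 0, ∀ (y w : E) (t : ℝ), R₂ ≤ ‖y‖ → ‖w‖ ≤ R₁ → 0 ≤ t →
      ‖y‖ * (1 + ‖y‖ - inner ℝ y e) + (t - max (inner ℝ y e) 0 / τ) ^ 2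
        ≤ K * (‖y - (τ * t) • e - w‖ ^ 2 + t) := by
  have hR₂ : 0 < R₂ := hR₁.trans_lt hR
  have hd : 0 < R₂ - R₁ := sub_pos.mpr hR
  have hK₂ : 0 < 3 + 2 * R₁ ^ 2 * (4 / (R₂ - R₁) ^ 2 + 2 * τ / (R₂ - R₁)) :=
    add_pos_of_pos_of_nonneg three_pos
      (mul_nonneg (by positivity) (add_nonneg (by positivity) (div_nonneg (by positivity) hd.le)))
  have hK₁ : 0 < 4 / R₂ + 2 + (τ ^ 2)⁻¹ + 2 * τ := by positivity
  refine ⟨_, mul_pos hK₁ hK₂, fun y w t hy hw ht => ?_⟩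
  refine (weight_add_sq_le he hτ hR₂ hy ht).trans ?_
  rw [mul_assoc]
  exact mul_le_mul_of_nonneg_left (sq_add_le_of_norm_le he hτ hR hy hw ht) hK₁.le

end UnitVector

lemma rpow_neg_add_sq_eq {D : ℝ} (hD : 0 < D) (ν u : ℝ) :
    (D + u ^ 2) ^ (-ν) = D ^ (-ν) * (1 + (u / √D) ^ 2) ^ (-ν) := by
  rw [← mul_rpow hD.le (by positivity), div_pow, sq_sqrt hD.le]
  congr 1
  field_simp

lemma integrable_rpow_neg_one_add_sq {ν : ℝ} (hν : 1 / 2 < ν) :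
    Integrable (fun v : ℝ => (1 + v ^ 2) ^ (-ν)) := by
  have := integrable_rpow_neg_one_add_norm_sq (E := ℝ) (μ := volume) (r := 2 * ν)
    (by simp; linarith)
  simpa [Real.norm_eq_abs, sq_abs, neg_div] using this

lemma integral_rpow_neg_one_add_sq_pos {ν : ℝ} (hν : 1 / 2 < ν) :
    0 < ∫ v : ℝ, (1 + v ^ 2) ^ (-ν) := by
  rw [integral_pos_iff_support_of_nonneg (fun v => by positivity)
    (integrable_rpow_neg_one_add_sq hν)]
  have : Function.support (fun v : ℝ => (1 + v ^ 2) ^ (-ν)) = Set.univ :=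
    Set.eq_univ_of_forall fun v => Function.mem_support.mpr (by positivity)
  simp [this]

lemma integrable_rpow_neg_add_sq {ν D : ℝ} (hν : 1 / 2 < ν) (hD : 0 < D) (t₀ : ℝ) :
    Integrable (fun t : ℝ => (D + (t - t₀) ^ 2) ^ (-ν)) := by
  simp_rw [rpow_neg_add_sq_eq hD]
  exact (((integrable_rpow_neg_one_add_sq hν).comp_div (sqrt_pos.mpr hD).ne').const_mul _
    ).comp_sub_right t₀

lemma integral_rpow_neg_add_sq {D : ℝ} (hD : 0 < D) (ν t₀ : ℝ) :
    ∫ t : ℝ, (D + (t - t₀) ^ 2) ^ (-ν) = D ^ (-ν + 1 / 2) * ∫ v : ℝ, (1 + v ^ 2) ^ (-ν) := by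
  rw [integral_sub_right_eq_self (fun u => (D + u ^ 2) ^ (-ν)) t₀]
  simp_rw [rpow_neg_add_sq_eq hD]
  rw [integral_const_mul, Measure.integral_comp_div (fun v => (1 + v ^ 2) ^ (-ν)),
    abs_of_pos (sqrt_pos.mpr hD), smul_eq_mul, rpow_add hD, ← sqrt_eq_rpow]
  ring

lemma setIntegral_Ioi_rpow_neg_le {ν K D t₀ : ℝ} (hν : 1 / 2 < ν) (hK : 0 < K) (hD : 0 < D)
    {f : ℝ → ℝ} (hf : ∀ t > 0, D + (t - t₀) ^ 2 ≤ K * f t) :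
    ∫ t in Set.Ioi 0, f t ^ (-ν) ≤ K ^ ν * (∫ v : ℝ, (1 + v ^ 2) ^ (-ν)) * D ^ (-ν + 1 / 2) := by
  have hf_pos : ∀ t > 0, 0 < f t := fun t ht =>
    pos_of_mul_pos_right ((by positivity : 0 < D + (t - t₀) ^ 2).trans_le (hf t ht)) hK.le
  have hg := (integrable_rpow_neg_add_sq hν hD t₀).const_mul (K ^ ν)
  have hfg : ∀ t > 0, f t ^ (-ν) ≤ K ^ ν * (D + (t - t₀) ^ 2) ^ (-ν) := by
    intro t ht
    calc f t ^ (-ν) ≤ (K⁻¹ * (D + (t - t₀) ^ 2)) ^ (-ν) :=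
          rpow_le_rpow_of_nonpos (by positivity) ((inv_mul_le_iff₀ hK).mpr (hf t ht))
            (by linarith)
      _ = K ^ ν * (D + (t - t₀) ^ 2) ^ (-ν) := by
          rw [mul_rpow (by positivity) (by positivity), inv_rpow hK.le, rpow_neg hK.le, inv_inv]
  calc ∫ t in Set.Ioi 0, f t ^ (-ν)
      ≤ ∫ t in Set.Ioi 0, K ^ ν * (D + (t - t₀) ^ 2) ^ (-ν) :=
        integral_mono_of_nonneg
          (ae_restrict_of_forall_mem measurableSet_Ioi fun t ht => rpow_nonneg (hf_pos t ht).le _)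
          hg.integrableOn (ae_restrict_of_forall_mem measurableSet_Ioi hfg)
    _ ≤ ∫ t, K ^ ν * (D + (t - t₀) ^ 2) ^ (-ν) :=
        setIntegral_le_integral hg (Filter.Eventually.of_forall fun t => by positivity)
    _ = K ^ ν * (∫ v : ℝ, (1 + v ^ 2) ^ (-ν)) * D ^ (-ν + 1 / 2) := by
        rw [integral_const_mul, integral_rpow_neg_add_sq hD]
        ring

theorem stmt2_general (τ ϱ R₁ R₂ ν : ℝ) (hτ : 0 < τ) (hR₁ : 0 < R₁)
    (hR : R₁ < R₂) (hν : 1 < ν) :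
    ∃ C > (0:ℝ), ∀ (y z : E3), R₂ ≤ ‖y‖ → ‖z‖ < R₁ →
      (∫ t in Set.Ioi (0:ℝ),
          (‖y - (τ*t) • e1 - mvec (NormedSpace.exp ((-t) • Om ϱ)) z‖^2 + t) ^ (-ν))
        ≤ C * (‖y‖ * sfun y) ^ (-ν + 1/2) := by
  have hν' : 1 / 2 < ν := by linarith
  obtain ⟨K, hK, h_weight⟩ := exists_weight_add_sq_le norm_e1 hτ hR₁.le hR
  have hI := integral_rpow_neg_one_add_sq_pos hν'
  refine ⟨K ^ ν * ∫ v : ℝ, (1 + v ^ 2) ^ (-ν), by positivity, fun y z hy hz => ?_⟩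
  have hD : 0 < ‖y‖ * sfun y :=
    mul_pos ((hR₁.trans hR).trans_le hy) (one_pos.trans_le (one_le_sfun y))
  refine setIntegral_Ioi_rpow_neg_le (t₀ := max (y 0) 0 / τ) hν' hK hD fun t ht => ?_
  have hw := (norm_mvec_exp_smul_Om ϱ t z).trans_le hz.le
  simpa only [sfun_eq, inner_e1] using h_weight y _ t hy hw ht.le

theorem stmt2 (τ ϱ R₁ R₂ ν : ℝ) (hτ : 0 < τ) (hϱ : ϱ ≠ 0) (hR₁ : 0 < R₁)
    (hR : R₁ < R₂) (hν : 1 < ν) :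
    ∃ C > (0:ℝ), ∀ (y z : E3), R₂ ≤ ‖y‖ → ‖z‖ < R₁ →
      (∫ t in Set.Ioi (0:ℝ),
          (‖y - (τ*t) • e1 - mvec (NormedSpace.exp ((-t) • Om ϱ)) z‖^2 + t) ^ (-ν))
        ≤ C * (‖y‖ * sfun y) ^ (-ν + 1/2) :=
  stmt2_general τ ϱ R₁ R₂ ν hτ hR₁ hR hν
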